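/- arXiv:2206.09207 — 2 statements merged into one kernel-verified Lean document; each statement's English description precedes it below -/
import Mathlib

section
/- Suppose φ ∈ C²[0, x_k] with x_m = m·h, k ≥ 1, and 0 < α < 1. Let E₁ = (1/Γ(1−α)) ∑_{j=0}^{k−1} ∫_{x_j}^{x_{j+1}} (x_k − τ)^{−α} (φ'(τ) − (φ(x_{j+1}) − φ(x_j))/h) dτ be the error of the linear (L1) approximation of the Caputo derivative at x_k. Then |E₁| ≤ (1/Γ(1−α)) · [1/8 + α/((1−α)(2−α))] · max_{τ∈[0,x_k]} |φ''(τ)| · h^{2−α}. -/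
open MeasureTheory Set intervalIntegral


lemma L1aux_taylor {X M : ℝ} {φ ψ φ'' : ℝ → ℝ}
    (hφc : ContinuousOn φ (Set.Icc 0 X)) (hψc : ContinuousOn ψ (Set.Icc 0 X))
    (hφ''c : ContinuousOn φ'' (Set.Icc 0 X))
    (hd1 : ∀ x ∈ Set.Ioo 0 X, HasDerivAt φ (ψ x) x)
    (hd2 : ∀ x ∈ Set.Ioo 0 X, HasDerivAt ψ (φ'' x) x)
    (hM : ∀ x ∈ Set.Icc 0 X, |φ'' x| ≤ M)
    {τ x : ℝ} (hτ : τ ∈ Set.Icc 0 X) (hx : x ∈ Set.Icc 0 X) :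
    |φ x - φ τ - ψ τ * (x - τ)| ≤ M / 2 * (x - τ) ^ 2 := by
  have key : ∀ p q : ℝ, p ∈ Set.Icc 0 X → q ∈ Set.Icc 0 X → p ≤ q →
      ∀ z : ℝ, (∫ s in p..q, (z - s) * φ'' s) =
        ((z - q) * ψ q + φ q) - ((z - p) * ψ p + φ p) := by
    intro p q hp hq hpq z
    have hsub : Set.Icc p q ⊆ Set.Icc 0 X := Set.Icc_subset_Icc hp.1 hq.2
    refine intervalIntegral.integral_eq_sub_of_hasDerivAt_of_le hpq
      (ContinuousOn.add (ContinuousOn.mul (by fun_prop) (hψc.mono hsub)) (hφc.mono hsub))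
      (fun s hs => ?_)
      ((ContinuousOn.mul (by fun_prop) (hφ''c.mono hsub)).intervalIntegrable_of_Icc hpq)
    have hs' : s ∈ Set.Ioo 0 X :=
      ⟨lt_of_le_of_lt hp.1 hs.1, lt_of_lt_of_le hs.2 hq.2⟩
    have h1 : HasDerivAt (fun s => (z - s) * ψ s) ((-1) * ψ s + (z - s) * φ'' s) s :=
      HasDerivAt.mul ((hasDerivAt_id s).const_sub z) (hd2 s hs')
    have h2 := h1.add (hd1 s hs')
    exact h2.congr_deriv (by ring)
  have hbound : ∀ p q : ℝ, p ∈ Set.Icc 0 X → q ∈ Set.Icc 0 X → p ≤ q →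
      ∀ z : ℝ, (∀ s ∈ Set.Icc p q, |z - s| * |φ'' s| ≤ (q - s) * M) →
      |∫ s in p..q, (z - s) * φ'' s| ≤ M / 2 * (q - p) ^ 2 := by
    intro p q hp hq hpq z hptw
    have hsub : Set.Icc p q ⊆ Set.Icc 0 X := Set.Icc_subset_Icc hp.1 hq.2
    have hcont : ContinuousOn (fun s => (z - s) * φ'' s) (Set.Icc p q) :=
      ContinuousOn.mul (by fun_prop) (hφ''c.mono hsub)
    calc |∫ s in p..q, (z - s) * φ'' s| ≤ ∫ s in p..q, |(z - s) * φ'' s| :=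
          intervalIntegral.abs_integral_le_integral_abs hpq
      _ ≤ ∫ s in p..q, (q - s) * M := by
          refine intervalIntegral.integral_mono_on hpq
            (hcont.abs.intervalIntegrable_of_Icc hpq)
            ((Continuous.continuousOn (by fun_prop)).intervalIntegrable_of_Icc hpq)
            (fun s hs => ?_)
          rw [abs_mul]; exact hptw s hs
      _ = M / 2 * (q - p) ^ 2 := by
          have := intervalIntegral.integral_comp_sub_left (fun s => s * M) q (a := p) (b := q)
          simp only [sub_self] at this
          rw [this, intervalIntegral.integral_mul_const, integral_id]; ring
  have hbound' : ∀ p q : ℝ, p ∈ Set.Icc 0 X → q ∈ Set.Icc 0 X → p ≤ q →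
      ∀ z : ℝ, (∀ s ∈ Set.Icc p q, |z - s| * |φ'' s| ≤ (s - p) * M) →
      |∫ s in p..q, (z - s) * φ'' s| ≤ M / 2 * (q - p) ^ 2 := by
    intro p q hp hq hpq z hptw
    have hsub : Set.Icc p q ⊆ Set.Icc 0 X := Set.Icc_subset_Icc hp.1 hq.2
    have hcont : ContinuousOn (fun s => (z - s) * φ'' s) (Set.Icc p q) :=
      ContinuousOn.mul (by fun_prop) (hφ''c.mono hsub)
    calc |∫ s in p..q, (z - s) * φ'' s| ≤ ∫ s in p..q, |(z - s) * φ'' s| :=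
          intervalIntegral.abs_integral_le_integral_abs hpq
      _ ≤ ∫ s in p..q, (s - p) * M := by
          refine intervalIntegral.integral_mono_on hpq
            (hcont.abs.intervalIntegrable_of_Icc hpq)
            ((Continuous.continuousOn (by fun_prop)).intervalIntegrable_of_Icc hpq)
            (fun s hs => ?_)
          rw [abs_mul]; exact hptw s hs
      _ = M / 2 * (q - p) ^ 2 := by
          have := intervalIntegral.integral_comp_sub_right (fun s => s * M) p (a := p) (b := q)
          simp only [sub_self] at this
          rw [this, intervalIntegral.integral_mul_const, integral_id]; ring
  rcases le_total τ x with hc | hc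
  · have h1 := key τ x hτ hx hc x
    have h2 := hbound τ x hτ hx hc x (fun s hs => by
      have h3 := hM s (Set.Icc_subset_Icc hτ.1 hx.2 hs)
      have h4 : |x - s| = x - s := abs_of_nonneg (by linarith [hs.2])
      have h5 : (0:ℝ) ≤ |φ'' s| := abs_nonneg _
      rw [h4]
      exact mul_le_mul le_rfl h3 h5 (by linarith [hs.2]))
    rw [h1] at h2
    convert h2 using 2 <;> ring
  · have h1 := key x τ hx hτ hc x
    have h2 := hbound' x τ hx hτ hc x (fun s hs => by
      have h3 := hM s (Set.Icc_subset_Icc hx.1 hτ.2 hs)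
      have h4 : |x - s| = s - x := by rw [abs_sub_comm]; exact abs_of_nonneg (by linarith [hs.1])
      have h5 : (0:ℝ) ≤ |φ'' s| := abs_nonneg _
      rw [h4]
      exact mul_le_mul le_rfl h3 h5 (by linarith [hs.1]))
    rw [h1] at h2
    rw [abs_sub_comm] at h2
    convert h2 using 2 <;> ring

lemma L1aux_integrable {f g : ℝ → ℝ} {a b : ℝ} (hab : a ≤ b)
    (hg : IntervalIntegrable g volume a b)
    (hf : AEStronglyMeasurable f (volume.restrict (Set.Ioc a b)))
    (hbd : ∀ τ ∈ Set.Ioc a b, |f τ| ≤ g τ) : IntervalIntegrable f volume a b := by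
  rw [intervalIntegrable_iff_integrableOn_Ioc_of_le hab] at hg ⊢
  refine MeasureTheory.Integrable.mono hg hf ?_
  refine (ae_restrict_iff' measurableSet_Ioc).2 (ae_of_all _ fun τ hτ => ?_)
  simpa only [Real.norm_eq_abs] using (hbd τ hτ).trans (le_abs_self _)




-- continuity of the weight away from the singularity
lemma L1aux_contOn {X c a b : ℝ} (hbX : b < X) :
    ContinuousOn (fun τ : ℝ => (X - τ) ^ c) (Set.Icc a b) := by
  intro τ hτ
  refine ContinuousAt.continuousWithinAt ?_
  exact (Real.continuousAt_rpow_const (X - τ) c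
    (Or.inl (ne_of_gt (by linarith [hτ.2])))).comp
    ((continuous_const.sub continuous_id).continuousAt)

-- interior weight integral evaluation
lemma L1aux_eval1 {X α a b : ℝ} (hα0 : 0 < α) (hab : a ≤ b) (hbX : b < X) :
    (∫ τ in a..b, (X - τ) ^ (-α - 1)) = ((X - b) ^ (-α) - (X - a) ^ (-α)) / α := by
  have h1 := intervalIntegral.integral_comp_sub_left (a := a) (b := b)
    (fun s => s ^ (-α - 1)) X
  rw [h1, integral_rpow (Or.inr ⟨by intro hc; linarith,
    Set.notMem_uIcc_of_lt (by linarith) (by linarith)⟩)]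
  have e1 : -α - 1 + 1 = -α := by ring
  rw [e1]
  rw [div_neg, ← neg_div, neg_sub]

lemma L1aux_eval2 {α h X a : ℝ} (hα0 : 0 < α) (hα1 : α < 1) (hh : 0 < h) (ha : a = X - h) :
    (∫ τ in a..X, (X - τ) ^ (-α - 1) * ((τ - a) * (X - τ)))
      = h ^ (2 - α) / ((1 - α) * (2 - α)) := by
  have hne1 : (-α : ℝ) ≠ 0 := by intro hc; linarith
  have hne3 : (1 - α : ℝ) ≠ 0 := by intro hc; linarith
  have hne4 : (2 - α : ℝ) ≠ 0 := by intro hc; linarith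
  have haX : a ≤ X := by rw [ha]; linarith
  have step1 : (∫ τ in a..X, (X - τ) ^ (-α - 1) * ((τ - a) * (X - τ)))
      = ∫ τ in a..X, (X - τ) ^ (-α) * (τ - a) := by
    refine intervalIntegral.integral_congr (fun τ hτ => ?_)
    rw [Set.uIcc_of_le haX] at hτ
    rcases eq_or_lt_of_le hτ.2 with heq | hlt
    · rw [heq, sub_self, Real.zero_rpow hne1, Real.zero_rpow (by intro hc; linarith)]
      ring
    · have hpos : (0:ℝ) < X - τ := by linarith
      have hid := (Real.rpow_add_one (ne_of_gt hpos) (-α - 1)).symm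
      have e1 : -α - 1 + 1 = -α := by ring
      rw [e1] at hid
      rw [← hid]; ring
  have step2 : (∫ τ in a..X, (X - τ) ^ (-α) * (τ - a))
      = ∫ s in (0:ℝ)..h, s ^ (-α) * (h - s) := by
    have h1 := intervalIntegral.integral_comp_sub_left (a := a) (b := X)
      (fun s => s ^ (-α) * (h - s)) X
    rw [sub_self, show X - a = h by rw [ha]; ring] at h1
    rw [← h1]
    refine intervalIntegral.integral_congr (fun τ hτ => ?_)
    have : h - (X - τ) = τ - a := by rw [ha]; ring
    simp only [this]
  have step3 : (∫ s in (0:ℝ)..h, s ^ (-α) * (h - s))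
      = ∫ s in (0:ℝ)..h, (h * s ^ (-α) - s ^ (1 - α)) := by
    refine intervalIntegral.integral_congr (fun s hs => ?_)
    rw [Set.uIcc_of_le hh.le] at hs
    rcases eq_or_lt_of_le hs.1 with heq | hlt
    · rw [← heq, Real.zero_rpow hne1, Real.zero_rpow hne3]; ring
    · have hid := (Real.rpow_add_one (ne_of_gt hlt) (-α)).symm
      have e1 : -α + 1 = 1 - α := by ring
      rw [e1] at hid
      rw [← hid]; ring
  have hint1 : IntervalIntegrable (fun s : ℝ => s ^ (-α)) volume 0 h :=
    intervalIntegrable_rpow' (by linarith)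
  have hint2 : IntervalIntegrable (fun s : ℝ => s ^ (1 - α)) volume 0 h :=
    intervalIntegrable_rpow' (by linarith)
  have step4 : (∫ s in (0:ℝ)..h, (h * s ^ (-α) - s ^ (1 - α)))
      = h * (h ^ (1 - α) / (1 - α)) - h ^ (2 - α) / (2 - α) := by
    rw [intervalIntegral.integral_sub (hint1.const_mul h) hint2,
      intervalIntegral.integral_const_mul, integral_rpow (Or.inl (by linarith)),
      integral_rpow (Or.inl (by linarith))]
    rw [show -α + 1 = 1 - α by ring, show (1:ℝ) - α + 1 = 2 - α by ring,
      Real.zero_rpow hne3, Real.zero_rpow hne4]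
    ring
  have hpow : h * h ^ (1 - α) = h ^ (2 - α) := by
    rw [show (2:ℝ) - α = 1 + (1 - α) by ring, Real.rpow_add hh, Real.rpow_one]
  rw [step1, step2, step3, step4]
  rw [mul_div_assoc'] at *
  rw [hpow]
  field_simp
  ring

set_option maxHeartbeats 2000000 in
lemma L1aux_key {X α M : ℝ} (hα0 : 0 < α) (hα1 : α < 1)
    {φ ψ φ'' : ℝ → ℝ}
    (hφc : ContinuousOn φ (Set.Icc 0 X)) (hψc : ContinuousOn ψ (Set.Icc 0 X))
    (hφ''c : ContinuousOn φ'' (Set.Icc 0 X))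
    (hd1 : ∀ x ∈ Set.Ioo 0 X, HasDerivAt φ (ψ x) x)
    (hd2 : ∀ x ∈ Set.Ioo 0 X, HasDerivAt ψ (φ'' x) x)
    (hM : ∀ x ∈ Set.Icc 0 X, |φ'' x| ≤ M)
    {a b : ℝ} (h0a : 0 ≤ a) (hab : a < b) (hbX : b ≤ X) :
    |∫ τ in a..b, (X - τ) ^ (-α) * (ψ τ - (φ b - φ a) / (b - a))| ≤
      α * (M / 2) * ∫ τ in a..b, (X - τ) ^ (-α - 1) * ((τ - a) * (b - τ)) := by
  have hba : (0:ℝ) < b - a := by linarith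
  have hsub : Set.Icc a b ⊆ Set.Icc 0 X := Set.Icc_subset_Icc h0a hbX
  have hM0 : 0 ≤ M := le_trans (abs_nonneg _) (hM a ⟨h0a, by linarith⟩)
  set D : ℝ := (φ b - φ a) / (b - a) with hD
  set e : ℝ → ℝ := fun τ => φ τ - φ a - D * (τ - a) with he
  have he_a : e a = 0 := by simp [he]
  have he_b : e b = 0 := by
    show φ b - φ a - D * (b - a) = 0
    rw [hD, div_mul_cancel₀ _ hba.ne', sub_self]
  -- pointwise bounds
  have hebnd : ∀ τ ∈ Set.Icc a b, |e τ| ≤ M / 2 * ((τ - a) * (b - τ)) := by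
    intro τ hτ
    have hτX := hsub hτ
    have hRa := L1aux_taylor hφc hψc hφ''c hd1 hd2 hM hτX (hsub (Set.left_mem_Icc.2 hab.le))
    have hRb := L1aux_taylor hφc hψc hφ''c hd1 hd2 hM hτX (hsub (Set.right_mem_Icc.2 hab.le))
    set Ra := φ a - φ τ - ψ τ * (a - τ) with hRadef
    set Rb := φ b - φ τ - ψ τ * (b - τ) with hRbdef
    have hid : e τ * (b - a) = -(b - τ) * Ra - (τ - a) * Rb := by
      simp only [he, hD, hRadef, hRbdef]
      field_simp
      ring
    have h1 : |e τ| * (b - a) = |(-(b - τ)) * Ra - (τ - a) * Rb| := by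
      rw [← abs_of_pos hba, ← abs_mul, hid]
    have h2 : |(-(b - τ)) * Ra - (τ - a) * Rb| ≤ (b - τ) * |Ra| + (τ - a) * |Rb| := by
      calc |(-(b - τ)) * Ra - (τ - a) * Rb| ≤ |(-(b - τ)) * Ra| + |(τ - a) * Rb| :=
            abs_sub _ _
        _ = (b - τ) * |Ra| + (τ - a) * |Rb| := by
            rw [abs_mul, abs_mul, abs_neg, abs_of_nonneg (by linarith [hτ.2] : (0:ℝ) ≤ b - τ),
              abs_of_nonneg (by linarith [hτ.1] : (0:ℝ) ≤ τ - a)]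
    have h3 : (b - τ) * |Ra| + (τ - a) * |Rb| ≤ M / 2 * ((τ - a) * (b - τ)) * (b - a) := by
      have e1 : (0:ℝ) ≤ b - τ := by linarith [hτ.2]
      have e2 : (0:ℝ) ≤ τ - a := by linarith [hτ.1]
      nlinarith [mul_le_mul_of_nonneg_left hRa e1, mul_le_mul_of_nonneg_left hRb e2]
    have h4 : |e τ| * (b - a) ≤ M / 2 * ((τ - a) * (b - τ)) * (b - a) := by
      rw [h1]; exact h2.trans h3
    exact le_of_mul_le_mul_right h4 hba
  have he'bnd : ∀ τ ∈ Set.Icc a b, |ψ τ - D| ≤ M * (b - a) := by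
    intro τ hτ
    have hτX := hsub hτ
    have hRa := L1aux_taylor hφc hψc hφ''c hd1 hd2 hM hτX (hsub (Set.left_mem_Icc.2 hab.le))
    have hRb := L1aux_taylor hφc hψc hφ''c hd1 hd2 hM hτX (hsub (Set.right_mem_Icc.2 hab.le))
    set Ra := φ a - φ τ - ψ τ * (a - τ) with hRadef
    set Rb := φ b - φ τ - ψ τ * (b - τ) with hRbdef
    have hid : (ψ τ - D) * (b - a) = Ra - Rb := by
      simp only [hD, hRadef, hRbdef]
      field_simp
      ring
    have h1 : |ψ τ - D| * (b - a) = |Ra - Rb| := by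
      rw [← abs_of_pos hba, ← abs_mul, hid]
    have h2 : |Ra - Rb| ≤ |Ra| + |Rb| := abs_sub _ _
    have h3 : |Ra| + |Rb| ≤ M * (b - a) * (b - a) := by
      have e1 : (0:ℝ) ≤ b - τ := by linarith [hτ.2]
      have e2 : (0:ℝ) ≤ τ - a := by linarith [hτ.1]
      have q1 : (a - τ) ^ 2 ≤ (b - a) ^ 2 := by nlinarith
      have q2 : (b - τ) ^ 2 ≤ (b - a) ^ 2 := by nlinarith
      nlinarith [mul_le_mul_of_nonneg_left q1 (by linarith : (0:ℝ) ≤ M / 2),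
        mul_le_mul_of_nonneg_left q2 (by linarith : (0:ℝ) ≤ M / 2)]
    have h4 : |ψ τ - D| * (b - a) ≤ M * (b - a) * (b - a) := by
      rw [h1]; exact h2.trans h3
    exact le_of_mul_le_mul_right h4 hba
  -- weight integrability and positivity
  have hw : IntervalIntegrable (fun τ => (X - τ) ^ (-α)) volume a b := by
    have h1 := (intervalIntegrable_rpow' (a := X - a) (b := X - b)
      (by linarith : (-1:ℝ) < -α)).comp_sub_left X
    simpa using h1
  have hwnn : ∀ τ : ℝ, τ ≤ X → 0 ≤ (X - τ) ^ (-α) := fun τ hτ =>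
    Real.rpow_nonneg (by linarith) _
  have hw1nn : ∀ τ : ℝ, τ ≤ X → 0 ≤ (X - τ) ^ (-α - 1) := fun τ hτ =>
    Real.rpow_nonneg (by linarith) _
  have hwmeas : Measurable (fun τ : ℝ => (X - τ) ^ (-α)) :=
    (measurable_const.sub measurable_id).pow measurable_const
  have hw1meas : Measurable (fun τ : ℝ => (X - τ) ^ (-α - 1)) :=
    (measurable_const.sub measurable_id).pow measurable_const
  have hne1 : (-α : ℝ) ≠ 0 := by intro hc; linarith
  have hne2 : (-α - 1 : ℝ) ≠ 0 := by intro hc; linarith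
  have hne3 : (1 - α : ℝ) ≠ 0 := by intro hc; linarith
  have hrpow : ∀ τ : ℝ, τ ≤ X → (X - τ) ^ (-α - 1) * (X - τ) = (X - τ) ^ (-α) := by
    intro τ hτ
    rcases eq_or_lt_of_le hτ with heq | hlt
    · rw [← heq, sub_self, Real.zero_rpow hne2, Real.zero_rpow hne1, zero_mul]
    · have h2 := (Real.rpow_add_one (ne_of_gt (by linarith : (0:ℝ) < X - τ)) (-α - 1)).symm
      rw [show (X - τ) ^ (-α) = (X - τ) ^ (-α - 1 + 1) by norm_num]
      exact h2
  have hrpow2 : ∀ τ : ℝ, τ ≤ X → (X - τ) ^ (-α) * (X - τ) = (X - τ) ^ (1 - α) := by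
    intro τ hτ
    rcases eq_or_lt_of_le hτ with heq | hlt
    · rw [← heq, sub_self, Real.zero_rpow hne1, Real.zero_rpow hne3, zero_mul]
    · have h2 := (Real.rpow_add_one (ne_of_gt (by linarith : (0:ℝ) < X - τ)) (-α)).symm
      rw [show (X - τ) ^ (1 - α) = (X - τ) ^ (-α + 1) by ring_nf]
      exact h2
  have hecont : ContinuousOn e (Set.Icc a b) := by
    rw [he]
    exact ((hφc.mono hsub).sub continuousOn_const).sub (by fun_prop)
  set g2 : ℝ → ℝ := fun τ => (X - τ) ^ (-α - 1) * ((τ - a) * (b - τ)) with hg2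
  have hg2bnd : ∀ τ ∈ Set.Icc a b, |g2 τ| ≤ (b - a) * (X - τ) ^ (-α) := by
    intro τ hτ
    have e1 : (0:ℝ) ≤ b - τ := by linarith [hτ.2]
    have e2 : (0:ℝ) ≤ τ - a := by linarith [hτ.1]
    have e3 : (0:ℝ) ≤ X - τ := by linarith [hτ.2]
    have habs : |g2 τ| = g2 τ :=
      abs_of_nonneg (mul_nonneg (hw1nn τ (by linarith)) (mul_nonneg e2 e1))
    rw [habs, hg2]
    calc (X - τ) ^ (-α - 1) * ((τ - a) * (b - τ))
        ≤ (X - τ) ^ (-α - 1) * ((X - τ) * (b - a)) := by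
          refine mul_le_mul_of_nonneg_left ?_ (hw1nn τ (by linarith))
          nlinarith
      _ = (b - a) * (X - τ) ^ (-α) := by
          rw [← hrpow τ (by linarith)]; ring
  have hg2int : IntervalIntegrable g2 volume a b := by
    refine L1aux_integrable hab.le (hw.const_mul (b - a)) ?_
      (fun τ hτ => hg2bnd τ (Set.Ioc_subset_Icc_self hτ))
    exact (hw1meas.mul ((measurable_id.sub measurable_const).mul
      (measurable_const.sub measurable_id))).aestronglyMeasurable
  set f1 : ℝ → ℝ := fun τ => (X - τ) ^ (-α) * (ψ τ - D) with hf1def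
  set f2 : ℝ → ℝ := fun τ => (X - τ) ^ (-α - 1) * e τ with hf2def
  have hsubIoc : Set.Ioc a b ⊆ Set.Icc 0 X := fun τ hτ => hsub (Set.Ioc_subset_Icc_self hτ)
  have hf1meas : AEStronglyMeasurable f1 (volume.restrict (Set.Ioc a b)) := by
    refine (hwmeas.aestronglyMeasurable).mul ?_
    exact ((hψc.mono hsubIoc).sub continuousOn_const).aestronglyMeasurable measurableSet_Ioc
  have hf1int : IntervalIntegrable f1 volume a b := by
    refine L1aux_integrable hab.le (hw.const_mul (M * (b - a))) hf1meas (fun τ hτ => ?_)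
    have hτ' := Set.Ioc_subset_Icc_self hτ
    have hτX : τ ≤ X := by linarith [hτ'.2]
    calc |f1 τ| = (X - τ) ^ (-α) * |ψ τ - D| := by
          rw [hf1def, abs_mul, abs_of_nonneg (hwnn τ hτX)]
      _ ≤ (X - τ) ^ (-α) * (M * (b - a)) :=
          mul_le_mul_of_nonneg_left (he'bnd τ hτ') (hwnn τ hτX)
      _ = M * (b - a) * (X - τ) ^ (-α) := mul_comm _ _
  have hf2bnd : ∀ τ ∈ Set.Icc a b, |f2 τ| ≤ M / 2 * g2 τ := by
    intro τ hτ
    have hτX : τ ≤ X := by linarith [hτ.2]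
    calc |f2 τ| = (X - τ) ^ (-α - 1) * |e τ| := by
          rw [hf2def, abs_mul, abs_of_nonneg (hw1nn τ hτX)]
      _ ≤ (X - τ) ^ (-α - 1) * (M / 2 * ((τ - a) * (b - τ))) :=
          mul_le_mul_of_nonneg_left (hebnd τ hτ) (hw1nn τ hτX)
      _ = M / 2 * g2 τ := by rw [hg2]; ring
  have hf2meas : AEStronglyMeasurable f2 (volume.restrict (Set.Ioc a b)) := by
    refine (hw1meas.aestronglyMeasurable).mul ?_
    exact (hecont.mono Set.Ioc_subset_Icc_self).aestronglyMeasurable measurableSet_Ioc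
  have hf2int : IntervalIntegrable f2 volume a b := by
    refine L1aux_integrable hab.le ((hw.const_mul (b - a)).const_mul (M / 2)) hf2meas
      (fun τ hτ => ?_)
    have hτ' := Set.Ioc_subset_Icc_self hτ
    calc |f2 τ| ≤ M / 2 * g2 τ := hf2bnd τ hτ'
      _ ≤ M / 2 * ((b - a) * (X - τ) ^ (-α)) := by
          refine mul_le_mul_of_nonneg_left ?_ (by linarith)
          calc g2 τ ≤ |g2 τ| := le_abs_self _
            _ ≤ (b - a) * (X - τ) ^ (-α) := hg2bnd τ hτ'
  -- the function u = w * e and FTC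
  set u : ℝ → ℝ := fun τ => (X - τ) ^ (-α) * e τ with hu
  have hucont : ContinuousOn u (Set.Icc a b) := by
    intro τ hτ
    rcases eq_or_lt_of_le (le_trans hτ.2 hbX : τ ≤ X) with heq | hlt
    · -- τ = X : squeeze to 0
      have huX : u X = 0 := by
        rw [hu]; simp [Real.zero_rpow hne1]
      rw [ContinuousWithinAt, heq, huX]
      have hG : Filter.Tendsto (fun t => M / 2 * (b - a) * (X - t) ^ (1 - α))
          (nhdsWithin X (Set.Icc a b)) (nhds 0) := by
        have hc : Continuous (fun t : ℝ => M / 2 * (b - a) * (X - t) ^ (1 - α)) :=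
          continuous_const.mul ((Real.continuous_rpow_const (by linarith)).comp
            (continuous_const.sub continuous_id))
        have := (hc.tendsto X).mono_left (nhdsWithin_le_nhds (s := Set.Icc a b))
        simpa [Real.zero_rpow hne3] using this
      refine squeeze_zero_norm' ?_ hG
      filter_upwards [self_mem_nhdsWithin] with t ht
      have e1 : (0:ℝ) ≤ b - t := by linarith [ht.2]
      have e2 : (0:ℝ) ≤ t - a := by linarith [ht.1]
      have htX : t ≤ X := le_trans ht.2 hbX
      have e3 : (0:ℝ) ≤ X - t := by linarith
      calc ‖u t‖ = (X - t) ^ (-α) * |e t| := by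
            rw [hu, Real.norm_eq_abs, abs_mul, abs_of_nonneg (hwnn t htX)]
        _ ≤ (X - t) ^ (-α) * (M / 2 * ((t - a) * (b - t))) :=
            mul_le_mul_of_nonneg_left (hebnd t ht) (hwnn t htX)
        _ ≤ (X - t) ^ (-α) * (M / 2 * ((b - a) * (X - t))) := by
            refine mul_le_mul_of_nonneg_left ?_ (hwnn t htX)
            have q : (t - a) * (b - t) ≤ (b - a) * (X - t) :=
              mul_le_mul (by linarith) (by linarith) e1 (by linarith)
            exact mul_le_mul_of_nonneg_left q (by linarith)
        _ = M / 2 * (b - a) * ((X - t) ^ (-α) * (X - t)) := by ring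
        _ = M / 2 * (b - a) * (X - t) ^ (1 - α) := by rw [hrpow2 t htX]
    · have hwc : ContinuousWithinAt (fun τ => (X - τ) ^ (-α)) (Set.Icc a b) τ := by
        refine ContinuousAt.continuousWithinAt ?_
        exact (Real.continuousAt_rpow_const (X - τ) (-α)
          (Or.inl (ne_of_gt (by linarith)))).comp
          ((continuous_const.sub continuous_id).continuousAt)
      exact hwc.mul (hecont τ hτ)
  have huderiv : ∀ τ ∈ Set.Ioo a b,
      HasDerivAt u (α * ((X - τ) ^ (-α - 1) * e τ) + (X - τ) ^ (-α) * (ψ τ - D)) τ := by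
    intro τ hτ
    have hτX : τ < X := lt_of_lt_of_le hτ.2 hbX
    have hτ0 : 0 < τ := lt_of_le_of_lt h0a hτ.1
    have hinner : HasDerivAt (fun τ : ℝ => X - τ) (-1) τ := (hasDerivAt_id τ).const_sub X
    have houter := Real.hasDerivAt_rpow_const (x := X - τ) (p := -α)
      (Or.inl (ne_of_gt (by linarith)))
    have hwda : HasDerivAt (fun τ => (X - τ) ^ (-α)) (α * (X - τ) ^ (-α - 1)) τ := by
      have hcomp := HasDerivAt.comp τ houter hinner
      exact hcomp.congr_deriv (by ring)
    have heda : HasDerivAt e (ψ τ - D) τ := by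
      have h1 := (hd1 τ ⟨hτ0, hτX⟩).sub_const (φ a)
      have h2 : HasDerivAt (fun τ : ℝ => D * (τ - a)) D τ := by
        simpa using ((hasDerivAt_id τ).sub_const a).const_mul D
      have h3 := h1.sub h2
      rw [he]
      exact h3
    have hprod := hwda.mul heda
    exact hprod.congr_deriv (by ring)
  have hsum_int : IntervalIntegrable
      (fun τ => α * ((X - τ) ^ (-α - 1) * e τ) + (X - τ) ^ (-α) * (ψ τ - D)) volume a b := by
    have h1 := (hf2int.const_mul α).add hf1int
    simpa [hf2def, hf1def] using h1
  have hftc := intervalIntegral.integral_eq_sub_of_hasDerivAt_of_le hab.le hucont huderiv hsum_int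
  have hub : u b = 0 := by rw [hu]; simp [he_b]
  have hua : u a = 0 := by rw [hu]; simp [he_a]
  rw [hub, hua, sub_zero] at hftc
  have hsplit : (∫ τ in a..b, (α * ((X - τ) ^ (-α - 1) * e τ) + (X - τ) ^ (-α) * (ψ τ - D)))
      = α * (∫ τ in a..b, f2 τ) + ∫ τ in a..b, f1 τ := by
    rw [intervalIntegral.integral_add (hf2int.const_mul α) hf1int,
      intervalIntegral.integral_const_mul]
  rw [hsplit] at hftc
  have hkey : (∫ τ in a..b, f1 τ) = -(α * ∫ τ in a..b, f2 τ) := by linarith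
  have hfinal : |∫ τ in a..b, f1 τ| ≤ α * (M / 2) * ∫ τ in a..b, g2 τ := by
    rw [hkey, abs_neg, abs_mul, abs_of_pos hα0]
    have h10 : |∫ τ in a..b, f2 τ| ≤ ∫ τ in a..b, |f2 τ| :=
      intervalIntegral.abs_integral_le_integral_abs hab.le
    have h11 : (∫ τ in a..b, |f2 τ|) ≤ ∫ τ in a..b, M / 2 * g2 τ :=
      intervalIntegral.integral_mono_on hab.le hf2int.abs (hg2int.const_mul _)
        (fun τ hτ => hf2bnd τ hτ)
    rw [intervalIntegral.integral_const_mul] at h11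
    calc α * |∫ τ in a..b, f2 τ| ≤ α * (M / 2 * ∫ τ in a..b, g2 τ) :=
          mul_le_mul_of_nonneg_left (h10.trans h11) hα0.le
      _ = α * (M / 2) * ∫ τ in a..b, g2 τ := by ring
  exact hfinal


set_option maxHeartbeats 1000000 in
theorem stmt_12 (α h : ℝ) (hα0 : 0 < α) (hα1 : α < 1) (hh : 0 < h)
    (k : ℕ) (hk : 1 ≤ k) (φ : ℝ → ℝ)
    (hφ : ContDiffOn ℝ 2 φ (Set.Icc 0 ((k : ℝ) * h))) :
    |(1 / Real.Gamma (1 - α)) *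
        ∑ j ∈ Finset.range k,
          ∫ τ in ((j : ℝ) * h)..(((j : ℝ) + 1) * h),
            ((k : ℝ) * h - τ) ^ (-α) *
              (derivWithin φ (Set.Icc 0 ((k : ℝ) * h)) τ -
                (φ (((j : ℝ) + 1) * h) - φ ((j : ℝ) * h)) / h)| ≤
      (1 / Real.Gamma (1 - α)) * (1 / 8 + α / ((1 - α) * (2 - α))) *
        sSup ((fun s => |iteratedDerivWithin 2 φ (Set.Icc 0 ((k : ℝ) * h)) s|) ''
          Set.Icc 0 ((k : ℝ) * h)) * h ^ (2 - α) := by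
  have hk' : (1:ℝ) ≤ (k:ℝ) := by exact_mod_cast hk
  set X : ℝ := (k:ℝ) * h with hXdef
  have hX : 0 < X := by
    have : (0:ℝ) < (k:ℝ) := by linarith
    exact mul_pos this hh
  set S := Set.Icc (0:ℝ) X with hSdef
  have hUD : UniqueDiffOn ℝ S := uniqueDiffOn_Icc hX
  set ψ : ℝ → ℝ := derivWithin φ S with hψdef
  set φ2 : ℝ → ℝ := iteratedDerivWithin 2 φ S with hφ2def
  set M : ℝ := sSup ((fun s => |φ2 s|) '' S) with hMdef
  have hφc : ContinuousOn φ S := hφ.continuousOn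
  have hψcd : ContDiffOn ℝ 1 ψ S := hφ.derivWithin hUD (by norm_num)
  have hψc : ContinuousOn ψ S := hψcd.continuousOn
  have hφ2c : ContinuousOn φ2 S := hφ.continuousOn_iteratedDerivWithin (by norm_num) hUD
  have hmem : ∀ x ∈ Set.Ioo (0:ℝ) X, S ∈ nhds x := fun x hx => Icc_mem_nhds hx.1 hx.2
  have hd1 : ∀ x ∈ Set.Ioo (0:ℝ) X, HasDerivAt φ (ψ x) x := by
    intro x hx
    have hxS : x ∈ S := Set.Ioo_subset_Icc_self hx
    exact ((hφ.differentiableOn (by norm_num) x hxS).hasDerivWithinAt).hasDerivAt (hmem x hx)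
  have hd2 : ∀ x ∈ Set.Ioo (0:ℝ) X, HasDerivAt ψ (φ2 x) x := by
    intro x hx
    have hxS : x ∈ S := Set.Ioo_subset_Icc_self hx
    have heq2 : φ2 x = derivWithin ψ S x := by
      rw [hφ2def, iteratedDerivWithin_succ, iteratedDerivWithin_one]
    rw [heq2]
    exact ((hψcd.differentiableOn one_ne_zero x hxS).hasDerivWithinAt).hasDerivAt (hmem x hx)
  have hMb : ∀ x ∈ S, |φ2 x| ≤ M := by
    intro x hx
    refine le_csSup ?_ ⟨x, hx, rfl⟩
    exact (isCompact_Icc.image_of_continuousOn hφ2c.abs).bddAbove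
  have hM0 : 0 ≤ M := le_trans (abs_nonneg _) (hMb 0 (Set.left_mem_Icc.2 hX.le))
  have hΓ : 0 < Real.Gamma (1 - α) := Real.Gamma_pos_of_pos (by linarith)
  have hD : (0:ℝ) < (1 - α) * (2 - α) := by nlinarith
  -- index bookkeeping
  obtain ⟨K, rfl⟩ : ∃ K, k = K + 1 := ⟨k - 1, (Nat.succ_pred_eq_of_pos hk).symm⟩
  set c : ℕ → ℝ := fun m => (X - (m:ℝ) * h) ^ (-α) with hcdef
  set I : ℕ → ℝ := fun j => ∫ τ in ((j : ℝ) * h)..(((j : ℝ) + 1) * h),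
      (X - τ) ^ (-α) * (ψ τ - (φ (((j : ℝ) + 1) * h) - φ ((j : ℝ) * h)) / h) with hIdef
  -- generic bound for each interval
  have hgen : ∀ j : ℕ, j < K + 1 → |I j| ≤
      α * (M / 2) * ∫ τ in ((j : ℝ) * h)..(((j : ℝ) + 1) * h),
        (X - τ) ^ (-α - 1) * ((τ - (j:ℝ)*h) * ((((j:ℝ)+1)*h) - τ)) := by
    intro j hj
    have hj1 : ((j:ℝ) + 1) ≤ (K:ℝ) + 1 := by
      have : (j:ℝ) ≤ (K:ℝ) := by exact_mod_cast Nat.lt_succ_iff.1 hj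
      linarith
    have hbX : ((j:ℝ) + 1) * h ≤ X := by
      rw [hXdef]
      push_cast
      nlinarith
    have h0a : 0 ≤ (j:ℝ) * h := by positivity
    have hab : (j:ℝ) * h < ((j:ℝ) + 1) * h := by nlinarith
    have hkey := L1aux_key hα0 hα1 hφc hψc hφ2c hd1 hd2 hMb h0a hab hbX
    have hIeq : I j = ∫ τ in ((j : ℝ) * h)..(((j : ℝ) + 1) * h),
        (X - τ) ^ (-α) * (ψ τ - (φ (((j : ℝ) + 1) * h) - φ ((j : ℝ) * h)) /
          ((((j:ℝ)+1)*h) - (j:ℝ)*h)) := by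
      rw [hIdef]
      simp only [show (((j:ℝ)+1)*h) - (j:ℝ)*h = h by ring]
    rw [hIeq]
    exact hkey
  -- interior intervals
  have hFin : ∀ j : ℕ, j < K → |I j| ≤ M * h ^ 2 / 8 * (c (j + 1) - c j) := by
    intro j hj
    have hjk : j < K + 1 := Nat.lt_succ_of_lt hj
    have hbX : ((j:ℝ) + 1) * h < X := by
      rw [hXdef]
      have : (j:ℝ) + 1 ≤ (K:ℝ) := by exact_mod_cast Nat.succ_le_of_lt hj
      push_cast
      nlinarith
    have hab : (j:ℝ) * h < ((j:ℝ) + 1) * h := by nlinarith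
    refine (hgen j hjk).trans ?_
    set a : ℝ := (j:ℝ) * h with hadef
    set b : ℝ := ((j:ℝ) + 1) * h with hbdef
    have hcont1 : ContinuousOn (fun τ : ℝ => (X - τ) ^ (-α - 1)) (Set.Icc a b) :=
      L1aux_contOn hbX
    have hmono : (∫ τ in a..b, (X - τ) ^ (-α - 1) * ((τ - a) * (b - τ)))
        ≤ ∫ τ in a..b, (X - τ) ^ (-α - 1) * (h ^ 2 / 4) := by
      refine intervalIntegral.integral_mono_on hab.le
        ((hcont1.mul (by fun_prop)).intervalIntegrable_of_Icc hab.le)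
        ((hcont1.mul (by fun_prop)).intervalIntegrable_of_Icc hab.le)
        (fun τ hτ => ?_)
      refine mul_le_mul_of_nonneg_left ?_ (Real.rpow_nonneg (by linarith [hτ.2, hbX]) _)
      have e1 : b - a = h := by rw [hadef, hbdef]; ring
      nlinarith [sq_nonneg ((τ - a) - (b - τ)), hτ.1, hτ.2]
    have heval : (∫ τ in a..b, (X - τ) ^ (-α - 1) * (h ^ 2 / 4))
        = h ^ 2 / 4 * (((X - b) ^ (-α) - (X - a) ^ (-α)) / α) := by
      rw [intervalIntegral.integral_mul_const, L1aux_eval1 hα0 hab.le hbX]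
      ring
    have hres : α * (M / 2) * (∫ τ in a..b, (X - τ) ^ (-α - 1) * ((τ - a) * (b - τ)))
        ≤ α * (M / 2) * (h ^ 2 / 4 * (((X - b) ^ (-α) - (X - a) ^ (-α)) / α)) := by
      refine mul_le_mul_of_nonneg_left ?_ (by positivity)
      rw [← heval]; exact hmono
    refine hres.trans (le_of_eq ?_)
    have hcb : c (j + 1) = (X - b) ^ (-α) := by
      show (X - ((j:ℕ) + 1 : ℕ) * h) ^ (-α) = (X - b) ^ (-α)
      rw [hbdef]; push_cast; ring_nf
    have hca : c j = (X - a) ^ (-α) := by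
      show (X - (j:ℝ) * h) ^ (-α) = (X - a) ^ (-α)
      rw [hadef]
    rw [hcb, hca]
    have hαne : α ≠ 0 := ne_of_gt hα0
    field_simp
    ring
  -- last interval
  have hFlast : |I K| ≤ α * (M / 2) * (h ^ (2 - α) / ((1 - α) * (2 - α))) := by
    have hlast : (((K:ℝ) + 1) * h) = X := by rw [hXdef]; push_cast; ring
    have ha : (K:ℝ) * h = X - h := by rw [hXdef]; push_cast; ring
    have := hgen K (Nat.lt_succ_self K)
    rw [hlast] at this
    refine this.trans ?_
    refine mul_le_mul_of_nonneg_left ?_ (by positivity)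
    rw [L1aux_eval2 hα0 hα1 hh ha]
  -- sum up
  have habs : |∑ j ∈ Finset.range (K + 1), I j| ≤ ∑ j ∈ Finset.range (K + 1), |I j| :=
    Finset.abs_sum_le_sum_abs _ _
  have hsplit : ∑ j ∈ Finset.range (K + 1), |I j|
      = (∑ j ∈ Finset.range K, |I j|) + |I K| := Finset.sum_range_succ _ _
  have htel : (∑ j ∈ Finset.range K, (c (j + 1) - c j)) = c K - c 0 :=
    Finset.sum_range_sub c K
  have hsum1 : (∑ j ∈ Finset.range K, |I j|) ≤ M * h ^ 2 / 8 * (c K - c 0) := by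
    calc (∑ j ∈ Finset.range K, |I j|)
        ≤ ∑ j ∈ Finset.range K, M * h ^ 2 / 8 * (c (j + 1) - c j) :=
          Finset.sum_le_sum (fun j hj => hFin j (Finset.mem_range.1 hj))
      _ = M * h ^ 2 / 8 * (c K - c 0) := by rw [← Finset.mul_sum, htel]
  have hcK : c K = h ^ (-α) := by
    have hXK : X - (K:ℝ) * h = h := by rw [hXdef]; push_cast; ring
    show (X - (K:ℝ) * h) ^ (-α) = h ^ (-α)
    rw [hXK]
  have hc0 : 0 ≤ c 0 := by
    have h0 : (0:ℝ) ≤ X - ((0:ℕ):ℝ) * h := by push_cast; linarith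
    exact Real.rpow_nonneg h0 _
  have hpow2 : h ^ (2:ℕ) * h ^ (-α) = h ^ (2 - α) := by
    rw [show (2:ℝ) - α = ((2:ℕ):ℝ) + (-α) by push_cast; ring, Real.rpow_add hh,
      Real.rpow_natCast]
  have hsum2 : (∑ j ∈ Finset.range (K + 1), |I j|)
      ≤ M / 8 * h ^ (2 - α) + α * (M / 2) * (h ^ (2 - α) / ((1 - α) * (2 - α))) := by
    rw [hsplit]
    have h1 : M * h ^ 2 / 8 * (c K - c 0) ≤ M / 8 * h ^ (2 - α) := by
      have h2 : c K - c 0 ≤ h ^ (-α) := by rw [hcK]; linarith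
      have h3 : M * h ^ 2 / 8 * (c K - c 0) ≤ M * h ^ 2 / 8 * h ^ (-α) :=
        mul_le_mul_of_nonneg_left h2 (by positivity)
      calc M * h ^ 2 / 8 * (c K - c 0) ≤ M * h ^ 2 / 8 * h ^ (-α) := h3
        _ = M / 8 * (h ^ (2:ℕ) * h ^ (-α)) := by ring
        _ = M / 8 * h ^ (2 - α) := by rw [hpow2]
    linarith [hFlast, hsum1]
  -- final assembly
  have hgoal : |(1 / Real.Gamma (1 - α)) * ∑ j ∈ Finset.range (K + 1), I j|
      ≤ (1 / Real.Gamma (1 - α)) * (1 / 8 + α / ((1 - α) * (2 - α))) * M * h ^ (2 - α) := by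
    rw [abs_mul, abs_of_pos (by positivity : (0:ℝ) < 1 / Real.Gamma (1 - α))]
    have hrpos : (0:ℝ) < h ^ (2 - α) := Real.rpow_pos_of_pos hh _
    have hend : M / 8 * h ^ (2 - α) + α * (M / 2) * (h ^ (2 - α) / ((1 - α) * (2 - α)))
        ≤ (1 / 8 + α / ((1 - α) * (2 - α))) * M * h ^ (2 - α) := by
      have e1 : (1 / 8 + α / ((1 - α) * (2 - α))) * M * h ^ (2 - α)
          - (M / 8 * h ^ (2 - α) + α * (M / 2) * (h ^ (2 - α) / ((1 - α) * (2 - α))))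
          = α * (M / 2) * (h ^ (2 - α) / ((1 - α) * (2 - α))) := by
        field_simp
        ring
      have e2 : 0 ≤ α * (M / 2) * (h ^ (2 - α) / ((1 - α) * (2 - α))) := by positivity
      linarith [e1, e2]
    calc (1 / Real.Gamma (1 - α)) * |∑ j ∈ Finset.range (K + 1), I j|
        ≤ (1 / Real.Gamma (1 - α)) *
            (M / 8 * h ^ (2 - α) + α * (M / 2) * (h ^ (2 - α) / ((1 - α) * (2 - α)))) :=
          mul_le_mul_of_nonneg_left (habs.trans hsum2) (by positivity)
      _ ≤ (1 / Real.Gamma (1 - α)) * ((1 / 8 + α / ((1 - α) * (2 - α))) * M * h ^ (2 - α)) :=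
          mul_le_mul_of_nonneg_left hend (by positivity)
      _ = (1 / Real.Gamma (1 - α)) * (1 / 8 + α / ((1 - α) * (2 - α))) * M * h ^ (2 - α) := by
          ring
  exact hgoal
end

section
/- Suppose φ ∈ C²[0, x₁] with x₁ = h, 0 < α < 1. Then |(1/Γ(1−α)) ∫_0^{x₁} (x₁ − τ)^{−α} (φ'(τ) − (φ(x₁) − φ(0))/h) dτ| ≤ (α/(2Γ(3−α))) · max_{τ∈[0,x₁]} |φ''(τ)| · h^{2−α}. -/
open MeasureTheory Set intervalIntegral

lemma taylor_aux (h x : ℝ) (hh : 0 < h) (hx : x ∈ Set.Icc 0 h) (φ f1 f2 : ℝ → ℝ)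
    (hφc : ContinuousOn φ (Set.Icc 0 h)) (hf1c : ContinuousOn f1 (Set.Icc 0 h))
    (hf2c : ContinuousOn f2 (Set.Icc 0 h))
    (hdφ : ∀ s ∈ Set.Ioo 0 h, HasDerivAt φ (f1 s) s)
    (hdf1 : ∀ s ∈ Set.Ioo 0 h, HasDerivAt f1 (f2 s) s) :
    φ x - φ 0 - x * f1 0 = ∫ s in (0:ℝ)..x, (x - s) * f2 s := by
  have hsub : Set.Icc (0:ℝ) x ⊆ Set.Icc 0 h := Set.Icc_subset_Icc le_rfl hx.2
  have key : ∫ s in (0:ℝ)..x, (x - s) * f2 s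
      = (φ x + (x - x) * f1 x) - (φ 0 + (x - 0) * f1 0) := by
    apply integral_eq_sub_of_hasDeriv_right_of_le (f := fun s => φ s + (x - s) * f1 s) hx.1
    · exact (hφc.mono hsub).add ((continuousOn_const.sub continuousOn_id).mul (hf1c.mono hsub))
    · intro s hs
      have hs' : s ∈ Set.Ioo 0 h := ⟨hs.1, lt_of_lt_of_le hs.2 hx.2⟩
      have hd : HasDerivAt (fun s => φ s + (x - s) * f1 s)
          (f1 s + ((-1) * f1 s + (x - s) * f2 s)) s :=
        (hdφ s hs').add ((((hasDerivAt_id s).const_sub x)).mul (hdf1 s hs'))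
      have : f1 s + ((-1) * f1 s + (x - s) * f2 s) = (x - s) * f2 s := by ring
      rw [this] at hd
      exact hd.hasDerivWithinAt
    · apply ContinuousOn.intervalIntegrable
      rw [Set.uIcc_of_le hx.1]
      exact (continuousOn_const.sub continuousOn_id).mul (hf2c.mono hsub)
  rw [key]; ring

lemma g_bound (h : ℝ) (hh : 0 < h) (φ f1 f2 : ℝ → ℝ) (M : ℝ)
    (hφc : ContinuousOn φ (Set.Icc 0 h)) (hf1c : ContinuousOn f1 (Set.Icc 0 h))
    (hf2c : ContinuousOn f2 (Set.Icc 0 h))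
    (hdφ : ∀ s ∈ Set.Ioo 0 h, HasDerivAt φ (f1 s) s)
    (hdf1 : ∀ s ∈ Set.Ioo 0 h, HasDerivAt f1 (f2 s) s)
    (hM : ∀ s ∈ Set.Icc 0 h, |f2 s| ≤ M) :
    ∀ x ∈ Set.Icc 0 h, |φ x - φ 0 - x * ((φ h - φ 0)/h)| ≤ M/2 * (x * (h - x)) := by
  intro x hx
  have hx0 := hx.1
  have hxh := hx.2
  set c : ℝ := (φ h - φ 0)/h with hc
  have hsub : Set.Icc (0:ℝ) x ⊆ Set.Icc 0 h := Set.Icc_subset_Icc le_rfl hxh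
  have hsub2 : Set.Icc x h ⊆ Set.Icc 0 h := Set.Icc_subset_Icc hx0 le_rfl
  have Tx := taylor_aux h x hh hx φ f1 f2 hφc hf1c hf2c hdφ hdf1
  have Th := taylor_aux h h hh (Set.right_mem_Icc.2 hh.le) φ f1 f2 hφc hf1c hf2c hdφ hdf1
  have hch : h * c = φ h - φ 0 := by rw [hc]; field_simp
  -- split the full integral
  have hint1 : IntervalIntegrable (fun s => (h - s) * f2 s) volume 0 x := by
    apply ContinuousOn.intervalIntegrable
    rw [Set.uIcc_of_le hx0]
    exact (continuousOn_const.sub continuousOn_id).mul (hf2c.mono hsub)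
  have hint2 : IntervalIntegrable (fun s => (h - s) * f2 s) volume x h := by
    apply ContinuousOn.intervalIntegrable
    rw [Set.uIcc_of_le hxh]
    exact (continuousOn_const.sub continuousOn_id).mul (hf2c.mono hsub2)
  have hsplit : (∫ s in (0:ℝ)..h, (h - s) * f2 s)
      = (∫ s in (0:ℝ)..x, (h - s) * f2 s) + ∫ s in x..h, (h - s) * f2 s :=
    (integral_add_adjacent_intervals hint1 hint2).symm
  -- g x expressed by two integrals
  have hint3 : IntervalIntegrable (fun s => (x - s) * f2 s) volume 0 x := by
    apply ContinuousOn.intervalIntegrable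
    rw [Set.uIcc_of_le hx0]
    exact (continuousOn_const.sub continuousOn_id).mul (hf2c.mono hsub)
  have hrepr : φ x - φ 0 - x * c
      = (∫ s in (0:ℝ)..x, ((x/h - 1) * s) * f2 s) - (x/h) * ∫ s in x..h, (h - s) * f2 s := by
    have hcomb : (∫ s in (0:ℝ)..x, ((x/h - 1) * s) * f2 s)
        = (∫ s in (0:ℝ)..x, (x - s) * f2 s) - (x/h) * ∫ s in (0:ℝ)..x, (h - s) * f2 s := by
      rw [← intervalIntegral.integral_const_mul, ← intervalIntegral.integral_sub hint3 (hint1.const_mul _)]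
      apply intervalIntegral.integral_congr
      intro s hs
      have : (x - s) * f2 s - x / h * ((h - s) * f2 s) = ((x/h - 1) * s) * f2 s := by
        field_simp; ring
      simpa using this.symm
    rw [hcomb]
    have h1 : φ x - φ 0 - x * f1 0 = ∫ s in (0:ℝ)..x, (x - s) * f2 s := Tx
    have h2 : φ h - φ 0 - h * f1 0 = ∫ s in (0:ℝ)..h, (h - s) * f2 s := Th
    rw [hsplit] at h2
    have hf10 : f1 0 = c - (1/h) * ((∫ s in (0:ℝ)..x, (h - s) * f2 s) + ∫ s in x..h, (h - s) * f2 s) := by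
      have : h * f1 0 = h * c - ((∫ s in (0:ℝ)..x, (h - s) * f2 s) + ∫ s in x..h, (h - s) * f2 s) := by
        rw [hch]; linarith
      field_simp at this ⊢
      linarith
    have hxg : φ x - φ 0 - x * c = (∫ s in (0:ℝ)..x, (x - s) * f2 s) + x * f1 0 - x * c := by
      linarith
    rw [hxg, hf10]
    field_simp
    ring
  rw [hrepr]
  -- bound the two pieces
  have hb1 : |∫ s in (0:ℝ)..x, ((x/h - 1) * s) * f2 s| ≤ ((1 - x/h) * M) * (x^2/2) := by
    have habs : |∫ s in (0:ℝ)..x, ((x/h - 1) * s) * f2 s|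
        ≤ ∫ s in (0:ℝ)..x, |((x/h - 1) * s) * f2 s| := by
      simpa only [Real.norm_eq_abs] using
        intervalIntegral.norm_integral_le_integral_norm (μ := volume)
          (f := fun s => ((x/h - 1) * s) * f2 s) hx0
    refine habs.trans ?_
    have hmono : (∫ s in (0:ℝ)..x, |((x/h - 1) * s) * f2 s|)
        ≤ ∫ s in (0:ℝ)..x, ((1 - x/h) * M) * s := by
      apply intervalIntegral.integral_mono_on hx0
      · apply ContinuousOn.intervalIntegrable
        rw [Set.uIcc_of_le hx0]
        exact (((continuousOn_const.mul continuousOn_id).mul (hf2c.mono hsub))).abs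
      · apply ContinuousOn.intervalIntegrable
        exact continuousOn_const.mul continuousOn_id
      · intro s hs
        have hs0 : 0 ≤ s := hs.1
        have hxh' : x / h ≤ 1 := by
          rw [div_le_one hh]; exact hxh
        have : |((x/h - 1) * s) * f2 s| = ((1 - x/h) * s) * |f2 s| := by
          rw [abs_mul, abs_mul]
          rw [abs_of_nonpos (by linarith : x/h - 1 ≤ 0), abs_of_nonneg hs0]
          ring
        rw [this]
        have hM' := hM s (hsub hs)
        have hMnn : (0:ℝ) ≤ M := le_trans (abs_nonneg _) hM'
        calc ((1 - x/h) * s) * |f2 s| ≤ ((1 - x/h) * s) * M := by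
              exact mul_le_mul_of_nonneg_left hM' (mul_nonneg (by linarith) hs0)
          _ = ((1 - x/h) * M) * s := by ring
    refine hmono.trans ?_
    rw [intervalIntegral.integral_const_mul, integral_id]
    ring_nf
    exact le_refl _
  have hb2 : |∫ s in x..h, (h - s) * f2 s| ≤ M * ((h - x)^2/2) := by
    have habs : |∫ s in x..h, (h - s) * f2 s| ≤ ∫ s in x..h, |(h - s) * f2 s| := by
      simpa only [Real.norm_eq_abs] using
        intervalIntegral.norm_integral_le_integral_norm (μ := volume)
          (f := fun s => (h - s) * f2 s) hxh
    refine habs.trans ?_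
    have hmono : (∫ s in x..h, |(h - s) * f2 s|) ≤ ∫ s in x..h, M * (h - s) := by
      apply intervalIntegral.integral_mono_on hxh
      · apply ContinuousOn.intervalIntegrable
        rw [Set.uIcc_of_le hxh]
        exact ((continuousOn_const.sub continuousOn_id).mul (hf2c.mono hsub2)).abs
      · apply ContinuousOn.intervalIntegrable
        exact continuousOn_const.mul (continuousOn_const.sub continuousOn_id)
      · intro s hs
        have hsh : s ≤ h := hs.2
        have : |(h - s) * f2 s| = (h - s) * |f2 s| := by
          rw [abs_mul, abs_of_nonneg (by linarith : (0:ℝ) ≤ h - s)]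
        rw [this]
        calc (h - s) * |f2 s| ≤ (h - s) * M := by
              apply mul_le_mul_of_nonneg_left (hM s (hsub2 hs)) (by linarith)
          _ = M * (h - s) := by ring
    refine hmono.trans ?_
    rw [intervalIntegral.integral_const_mul]
    have : (∫ s in x..h, (h - s)) = (h - x)^2/2 := by
      rw [intervalIntegral.integral_sub intervalIntegrable_const intervalIntegral.intervalIntegrable_id,
        integral_id, intervalIntegral.integral_const, smul_eq_mul]
      ring
    rw [this]
  have hxhdiv : 0 ≤ x / h := by positivity
  have hMnn : (0:ℝ) ≤ M := le_trans (abs_nonneg _) (hM 0 (Set.left_mem_Icc.2 hh.le))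
  calc |(∫ s in (0:ℝ)..x, ((x/h - 1) * s) * f2 s) - (x/h) * ∫ s in x..h, (h - s) * f2 s|
      ≤ |∫ s in (0:ℝ)..x, ((x/h - 1) * s) * f2 s| + (x/h) * |∫ s in x..h, (h - s) * f2 s| := by
        refine (abs_sub _ _).trans ?_
        rw [abs_mul, abs_of_nonneg hxhdiv]
    _ ≤ ((1 - x/h) * M) * (x^2/2) + (x/h) * (M * ((h - x)^2/2)) := by
        have := mul_le_mul_of_nonneg_left hb2 hxhdiv
        linarith
    _ = M/2 * (x * (h - x)) * ((x + (h - x))/h) := by field_simp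
    _ = M/2 * (x * (h - x)) := by
        have : (x + (h - x))/h = 1 := by field_simp; ring
        rw [this, mul_one]

lemma rpow_sub_integrable (h p : ℝ) (hp : -1 < p) :
    IntervalIntegrable (fun τ => (h - τ) ^ p) volume 0 h := by
  have := (intervalIntegrable_rpow' (a := 0) (b := h) hp).comp_sub_left h
  simpa using this.symm

lemma rpow_sub_integral (h p : ℝ) (hp : -1 < p) :
    ∫ τ in (0:ℝ)..h, (h - τ) ^ p = h ^ (p+1) / (p+1) := by
  rw [intervalIntegral.integral_comp_sub_left (fun x => x ^ p) h]
  simp only [sub_self, sub_zero]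
  rw [integral_rpow (Or.inl hp), Real.zero_rpow (by linarith : p+1 ≠ 0)]
  ring

lemma integrable_helper (h p C : ℝ) (hh : 0 < h) (hp : -1 < p) (F : ℝ → ℝ)
    (hFc : ContinuousOn F (Set.Ioo 0 h))
    (hFb : ∀ τ ∈ Set.Ioo 0 h, |F τ| ≤ C * (h - τ) ^ p) :
    IntervalIntegrable F volume 0 h := by
  rw [intervalIntegrable_iff_integrableOn_Ioo_of_le hh.le]
  have hbase : IntegrableOn (fun τ => C * ((h - τ) ^ p)) (Set.Ioo 0 h) := by
    have := (rpow_sub_integrable h p hp).const_mul C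
    rwa [intervalIntegrable_iff_integrableOn_Ioo_of_le hh.le] at this
  refine Integrable.mono' hbase (hFc.aestronglyMeasurable measurableSet_Ioo) ?_
  filter_upwards [ae_restrict_mem measurableSet_Ioo] with τ hτ
  simpa [Real.norm_eq_abs] using hFb τ hτ

theorem stmt_13 (α h : ℝ) (hα0 : 0 < α) (hα1 : α < 1) (hh : 0 < h)
    (φ : ℝ → ℝ) (hφ : ContDiffOn ℝ 2 φ (Set.Icc 0 h)) :
    |(1 / Real.Gamma (1 - α)) *
        ∫ τ in (0 : ℝ)..h,
          (h - τ) ^ (-α) *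
            (derivWithin φ (Set.Icc 0 h) τ - (φ h - φ 0) / h)| ≤
      α / (2 * Real.Gamma (3 - α)) *
        sSup ((fun s => |iteratedDerivWithin 2 φ (Set.Icc 0 h) s|) '' Set.Icc 0 h) *
        h ^ (2 - α) := by
  have huniq : UniqueDiffOn ℝ (Set.Icc (0:ℝ) h) := uniqueDiffOn_Icc hh
  set I := Set.Icc (0:ℝ) h with hIdef
  set f1 := derivWithin φ I with hf1def
  set f2 := derivWithin f1 I with hf2def
  set c : ℝ := (φ h - φ 0) / h with hcdef
  set g : ℝ → ℝ := fun x => φ x - φ 0 - x * c with hgdef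
  have hφc : ContinuousOn φ I := hφ.continuousOn
  have hf1cd : ContDiffOn ℝ 1 f1 I := hφ.derivWithin huniq (by norm_num)
  have hf1c : ContinuousOn f1 I := hf1cd.continuousOn
  have hf2cd : ContDiffOn ℝ 0 f2 I := hf1cd.derivWithin (m := 0) huniq (by norm_num)
  have hf2c : ContinuousOn f2 I := hf2cd.continuousOn
  have hmemn : ∀ s ∈ Set.Ioo (0:ℝ) h, I ∈ nhds s := fun s hs => Icc_mem_nhds hs.1 hs.2
  have hsubI : ∀ s ∈ Set.Ioo (0:ℝ) h, s ∈ I := fun s hs => ⟨hs.1.le, hs.2.le⟩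
  have hdφ : ∀ s ∈ Set.Ioo (0:ℝ) h, HasDerivAt φ (f1 s) s := by
    intro s hs
    have hdiff : DifferentiableWithinAt ℝ φ I s :=
      (hφ.differentiableOn (by norm_num)) s (hsubI s hs)
    have hda := hdiff.differentiableAt (hmemn s hs)
    have heq : f1 s = deriv φ s := derivWithin_of_mem_nhds (hmemn s hs)
    rw [heq]; exact hda.hasDerivAt
  have hdf1 : ∀ s ∈ Set.Ioo (0:ℝ) h, HasDerivAt f1 (f2 s) s := by
    intro s hs
    have hdiff : DifferentiableWithinAt ℝ f1 I s :=
      (hf1cd.differentiableOn (by norm_num)) s (hsubI s hs)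
    have hda := hdiff.differentiableAt (hmemn s hs)
    have heq : f2 s = deriv f1 s := derivWithin_of_mem_nhds (hmemn s hs)
    rw [heq]; exact hda.hasDerivAt
  set M := sSup ((fun s => |iteratedDerivWithin 2 φ I s|) '' I) with hMdef
  have hf2eq : ∀ s ∈ I, iteratedDerivWithin 2 φ I s = f2 s := by
    intro s hs
    rw [show (2:ℕ) = 1 + 1 from rfl, iteratedDerivWithin_succ]
    exact derivWithin_congr (fun x hx => congrFun iteratedDerivWithin_one x)
      (congrFun iteratedDerivWithin_one s)
  have hbdd : BddAbove ((fun s => |iteratedDerivWithin 2 φ I s|) '' I) :=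
    (isCompact_Icc.image_of_continuousOn
      ((hφ.continuousOn_iteratedDerivWithin (by norm_num) huniq).abs)).bddAbove
  have hM : ∀ s ∈ I, |f2 s| ≤ M := by
    intro s hs
    rw [← hf2eq s hs]
    exact le_csSup hbdd ⟨s, hs, rfl⟩
  have h0I : (0:ℝ) ∈ I := Set.left_mem_Icc.2 hh.le
  have hhI : h ∈ I := Set.right_mem_Icc.2 hh.le
  have hM0 : 0 ≤ M := le_trans (abs_nonneg _) (le_csSup hbdd ⟨0, h0I, rfl⟩)
  have hgb : ∀ x ∈ I, |g x| ≤ M/2 * (x * (h - x)) :=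
    g_bound h hh φ f1 f2 M hφc hf1c hf2c hdφ hdf1 hM
  have hg0 : g 0 = 0 := by simp [hgdef]
  have hgh : g h = 0 := by simp only [hgdef, hcdef]; field_simp; ring
  have hgc : ContinuousOn g I :=
    (hφc.sub continuousOn_const).sub (continuousOn_id.mul continuousOn_const)
  have hdg : ∀ s ∈ Set.Ioo (0:ℝ) h, HasDerivAt g (f1 s - c) s := by
    intro s hs
    have := ((hdφ s hs).sub_const (φ 0)).sub ((hasDerivAt_id s).mul_const c)
    rw [show (f1 s - c) = f1 s - 1 * c by ring]; exact this
  -- bound for |f1 - c| on I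
  obtain ⟨C1, hC1⟩ : ∃ C1, ∀ x ∈ I, ‖f1 x - c‖ ≤ C1 :=
    isCompact_Icc.exists_bound_of_continuousOn (hf1c.sub continuousOn_const)
  -- integrabilities on [0,h]
  have hK1int : IntervalIntegrable (fun τ => (h - τ) ^ (-α) * (f1 τ - c)) volume 0 h := by
    apply integrable_helper h (-α) C1 hh (by linarith)
    · exact (((continuousOn_const.sub continuousOn_id).rpow_const
        (fun τ hτ => Or.inl (by simp only [Set.mem_Ioo] at hτ; intro hc; simp only [Pi.sub_apply, id_eq] at hc; nlinarith [hτ.2]))).mul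
        ((hf1c.sub continuousOn_const).mono (fun x hx => ⟨hx.1.le, hx.2.le⟩)))
    · intro τ hτ
      have hpos : (0:ℝ) < h - τ := by linarith [hτ.2]
      rw [abs_mul, abs_of_nonneg (Real.rpow_nonneg hpos.le _), mul_comm C1 _]
      exact mul_le_mul_of_nonneg_left (by simpa [Real.norm_eq_abs] using hC1 τ (hsubI τ hτ))
        (Real.rpow_nonneg hpos.le _)
  have hK2int : IntervalIntegrable (fun τ => (h - τ) ^ (-α-1) * g τ) volume 0 h := by
    apply integrable_helper h (-α) (M/2 * h) hh (by linarith)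
    · exact (((continuousOn_const.sub continuousOn_id).rpow_const
        (fun τ hτ => Or.inl (by simp only [Set.mem_Ioo] at hτ; intro hc; simp only [Pi.sub_apply, id_eq] at hc; nlinarith [hτ.2]))).mul
        (hgc.mono (fun x hx => ⟨hx.1.le, hx.2.le⟩)))
    · intro τ hτ
      have hpos : (0:ℝ) < h - τ := by linarith [hτ.2]
      have hrw : (h - τ) ^ (-α-1) * (h - τ) = (h - τ) ^ (-α) := by
        rw [← Real.rpow_add_one hpos.ne']
        norm_num
      have h1 : |(h - τ) ^ (-α-1) * g τ| = (h - τ) ^ (-α-1) * |g τ| := by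
        rw [abs_mul, abs_of_nonneg (Real.rpow_nonneg hpos.le _)]
      rw [h1]
      calc (h - τ) ^ (-α-1) * |g τ| ≤ (h - τ) ^ (-α-1) * (M/2 * (τ * (h - τ))) :=
            mul_le_mul_of_nonneg_left (hgb τ (hsubI τ hτ)) (Real.rpow_nonneg hpos.le _)
        _ = (M/2 * τ) * ((h - τ) ^ (-α-1) * (h - τ)) := by ring
        _ = (M/2 * τ) * (h - τ) ^ (-α) := by rw [hrw]
        _ ≤ (M/2 * h) * (h - τ) ^ (-α) := by
            apply mul_le_mul_of_nonneg_right _ (Real.rpow_nonneg hpos.le _)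
            have := hτ.2
            nlinarith [hτ.1, hM0]
  -- (★) identity on [0, t] for t < h
  have hstar : ∀ t ∈ Set.Ico (0:ℝ) h,
      (∫ τ in (0:ℝ)..t, (h - τ) ^ (-α) * (f1 τ - c))
        = (h - t) ^ (-α) * g t - α * ∫ τ in (0:ℝ)..t, (h - τ) ^ (-α-1) * g τ := by
    intro t ht
    have hth : t < h := ht.2
    have ht0 : 0 ≤ t := ht.1
    have hcont1 : ContinuousOn (fun τ => (h - τ) ^ (-α-1)) (Set.Icc 0 t) :=
      (continuousOn_const.sub continuousOn_id).rpow_const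
        (fun τ hτ => Or.inl (by intro hc; simp only [Pi.sub_apply, id_eq] at hc; simp only [Set.mem_Icc] at hτ; nlinarith [hτ.2]))
    have hcont0 : ContinuousOn (fun τ => (h - τ) ^ (-α)) (Set.Icc 0 t) :=
      (continuousOn_const.sub continuousOn_id).rpow_const
        (fun τ hτ => Or.inl (by intro hc; simp only [Pi.sub_apply, id_eq] at hc; simp only [Set.mem_Icc] at hτ; nlinarith [hτ.2]))
    have hsubt : Set.Icc (0:ℝ) t ⊆ I := Set.Icc_subset_Icc le_rfl hth.le
    have hi2 : IntervalIntegrable (fun τ => (h - τ) ^ (-α-1) * g τ) volume 0 t := by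
      apply ContinuousOn.intervalIntegrable
      rw [Set.uIcc_of_le ht0]
      exact hcont1.mul (hgc.mono hsubt)
    have hi1 : IntervalIntegrable (fun τ => (h - τ) ^ (-α) * (f1 τ - c)) volume 0 t := by
      apply ContinuousOn.intervalIntegrable
      rw [Set.uIcc_of_le ht0]
      exact hcont0.mul ((hf1c.sub continuousOn_const).mono hsubt)
    have hFTC : ∫ τ in (0:ℝ)..t,
        (α * ((h - τ) ^ (-α-1) * g τ) + (h - τ) ^ (-α) * (f1 τ - c))
        = (h - t) ^ (-α) * g t - (h - 0) ^ (-α) * g 0 := by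
      apply integral_eq_sub_of_hasDeriv_right_of_le (f := fun τ => (h - τ) ^ (-α) * g τ) ht0
      · exact hcont0.mul (hgc.mono hsubt)
      · intro τ hτ
        have hτ' : τ ∈ Set.Ioo (0:ℝ) h := ⟨hτ.1, lt_trans hτ.2 hth⟩
        have hpos : (0:ℝ) < h - τ := by linarith [hτ'.2]
        have hbase : HasDerivAt (fun τ : ℝ => h - τ) (-1) τ := by
          simpa using (hasDerivAt_id τ).const_sub h
        have hr : HasDerivAt (fun y : ℝ => y ^ (-α)) (-α * (h - τ) ^ (-α-1)) (h - τ) :=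
          Real.hasDerivAt_rpow_const (Or.inl hpos.ne')
        have hcomp : HasDerivAt (fun τ : ℝ => (h - τ) ^ (-α)) (α * (h - τ) ^ (-α-1)) τ := by
          have := hr.comp τ hbase
          rw [show α * (h - τ) ^ (-α-1) = -α * (h - τ) ^ (-α-1) * -1 by ring]
          exact this
        have := hcomp.mul (hdg τ hτ')
        have heq : α * (h - τ) ^ (-α-1) * g τ + (h - τ) ^ (-α) * (f1 τ - c)
            = α * ((h - τ) ^ (-α-1) * g τ) + (h - τ) ^ (-α) * (f1 τ - c) := by ring
        rw [heq] at this
        exact this.hasDerivWithinAt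
      · apply IntervalIntegrable.add (hi2.const_mul α) hi1
    rw [intervalIntegral.integral_add (hi2.const_mul α) hi1,
      intervalIntegral.integral_const_mul] at hFTC
    rw [hg0] at hFTC
    simp only [mul_zero, sub_zero] at hFTC
    linarith
  -- limits as t → h⁻
  have hne : Filter.NeBot (nhdsWithin h (Set.Ico 0 h)) := by
    rw [← mem_closure_iff_nhdsWithin_neBot, closure_Ico hh.ne, Set.mem_Icc]
    exact ⟨hh.le, le_rfl⟩
  have hmono : nhdsWithin h (Set.Ico 0 h) ≤ nhdsWithin h (Set.Icc 0 h) :=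
    nhdsWithin_mono h Set.Ico_subset_Icc_self
  have l1 : Filter.Tendsto (fun t => ∫ τ in (0:ℝ)..t, (h - τ) ^ (-α) * (f1 τ - c))
      (nhdsWithin h (Set.Ico 0 h))
      (nhds (∫ τ in (0:ℝ)..h, (h - τ) ^ (-α) * (f1 τ - c))) := by
    have := (continuousOn_primitive_interval' (μ := volume) hK1int
      (by rw [Set.uIcc_of_le hh.le]; exact h0I)) h (by rw [Set.uIcc_of_le hh.le]; exact hhI)
    rw [Set.uIcc_of_le hh.le] at this
    exact (this.tendsto).mono_left hmono
  have l3 : Filter.Tendsto (fun t => ∫ τ in (0:ℝ)..t, (h - τ) ^ (-α-1) * g τ)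
      (nhdsWithin h (Set.Ico 0 h))
      (nhds (∫ τ in (0:ℝ)..h, (h - τ) ^ (-α-1) * g τ)) := by
    have := (continuousOn_primitive_interval' (μ := volume) hK2int
      (by rw [Set.uIcc_of_le hh.le]; exact h0I)) h (by rw [Set.uIcc_of_le hh.le]; exact hhI)
    rw [Set.uIcc_of_le hh.le] at this
    exact (this.tendsto).mono_left hmono
  have l2 : Filter.Tendsto (fun t => (h - t) ^ (-α) * g t)
      (nhdsWithin h (Set.Ico 0 h)) (nhds 0) := by
    apply squeeze_zero_norm' (a := fun t => (M/2 * h) * (h - t) ^ (1-α))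
    · apply Filter.eventually_of_mem self_mem_nhdsWithin
      intro t ht
      have hth : t < h := ht.2
      have hpos : (0:ℝ) < h - t := by linarith
      have h1 : ‖(h - t) ^ (-α) * g t‖ = (h - t) ^ (-α) * |g t| := by
        rw [Real.norm_eq_abs, abs_mul, abs_of_nonneg (Real.rpow_nonneg hpos.le _)]
      rw [h1]
      have hrw : (h - t) ^ (-α) * (h - t) = (h - t) ^ (1-α) := by
        rw [← Real.rpow_add_one hpos.ne']
        norm_num
        rw [show -α + 1 = 1 - α by ring]
      calc (h - t) ^ (-α) * |g t| ≤ (h - t) ^ (-α) * (M/2 * (t * (h - t))) :=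
            mul_le_mul_of_nonneg_left (hgb t ⟨ht.1, hth.le⟩) (Real.rpow_nonneg hpos.le _)
        _ = (M/2 * t) * ((h - t) ^ (-α) * (h - t)) := by ring
        _ = (M/2 * t) * (h - t) ^ (1-α) := by rw [hrw]
        _ ≤ (M/2 * h) * (h - t) ^ (1-α) := by
            apply mul_le_mul_of_nonneg_right _ (Real.rpow_nonneg hpos.le _)
            nlinarith [ht.1, hM0, hth]
    · have hc1 : Filter.Tendsto (fun t : ℝ => h - t) (nhdsWithin h (Set.Ico 0 h)) (nhds 0) := by
        have : Filter.Tendsto (fun t : ℝ => h - t) (nhds h) (nhds (h - h)) :=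
          (continuous_const.sub continuous_id).tendsto h
        rw [sub_self] at this
        exact this.mono_left nhdsWithin_le_nhds
      have hc2 : Filter.Tendsto (fun y : ℝ => y ^ (1-α)) (nhds 0) (nhds 0) := by
        have := (Real.continuousAt_rpow_const 0 (1-α) (Or.inr (by linarith))).tendsto
        rwa [Real.zero_rpow (by linarith : (1:ℝ)-α ≠ 0)] at this
      have := (hc2.comp hc1).const_mul (M/2 * h)
      simpa using this
  -- conclude the identity on [0,h]
  have hJ : (∫ τ in (0:ℝ)..h, (h - τ) ^ (-α) * (f1 τ - c))
      = -(α * ∫ τ in (0:ℝ)..h, (h - τ) ^ (-α-1) * g τ) := by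
    have lrhs : Filter.Tendsto
        (fun t => (h - t) ^ (-α) * g t - α * ∫ τ in (0:ℝ)..t, (h - τ) ^ (-α-1) * g τ)
        (nhdsWithin h (Set.Ico 0 h))
        (nhds (0 - α * ∫ τ in (0:ℝ)..h, (h - τ) ^ (-α-1) * g τ)) :=
      l2.sub (l3.const_mul α)
    have lLhs : Filter.Tendsto (fun t => ∫ τ in (0:ℝ)..t, (h - τ) ^ (-α) * (f1 τ - c))
        (nhdsWithin h (Set.Ico 0 h))
        (nhds (0 - α * ∫ τ in (0:ℝ)..h, (h - τ) ^ (-α-1) * g τ)) := by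
      apply Filter.Tendsto.congr' _ lrhs
      apply Filter.eventually_of_mem self_mem_nhdsWithin
      intro t ht
      exact (hstar t ht).symm
    have := tendsto_nhds_unique l1 lLhs
    rw [this]; ring
  -- final estimate
  have hne1 : (1:ℝ) - α ≠ 0 := by linarith
  have hne2 : (2:ℝ) - α ≠ 0 := by linarith
  have heqpt : ∀ τ : ℝ, τ * (h - τ) ^ (-α) = h * (h - τ) ^ (-α) - (h - τ) ^ (1-α) := by
    intro τ
    by_cases hτ : h - τ = 0
    · rw [hτ, Real.zero_rpow (by linarith : -α ≠ 0), Real.zero_rpow (by linarith : (1:ℝ)-α ≠ 0)]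
      ring
    · have : (h - τ) ^ (1-α) = (h - τ) ^ (-α) * (h - τ) := by
        rw [show (1:ℝ)-α = -α + 1 by ring, Real.rpow_add_one hτ]
      rw [this]; ring
  have Ia : IntervalIntegrable (fun τ => (h - τ) ^ (-α)) volume 0 h :=
    rpow_sub_integrable h (-α) (by linarith)
  have Ib : IntervalIntegrable (fun τ => (h - τ) ^ (1-α)) volume 0 h :=
    rpow_sub_integrable h (1-α) (by linarith)
  have hKb : IntervalIntegrable (fun τ => τ * (h - τ) ^ (-α)) volume 0 h := by
    have : IntervalIntegrable (fun τ => h * (h - τ) ^ (-α) - (h - τ) ^ (1-α)) volume 0 h :=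
      (Ia.const_mul h).sub Ib
    apply this.congr
    intro τ _; simp only
    rw [heqpt τ]
  have hpow2 : h * h ^ ((1:ℝ)-α) = h ^ ((2:ℝ)-α) := by
    nth_rewrite 1 [← Real.rpow_one h]
    rw [← Real.rpow_add hh, show (1:ℝ) + (1 - α) = 2 - α by ring]
  have hKbval : ∫ τ in (0:ℝ)..h, τ * (h - τ) ^ (-α)
      = h ^ ((2:ℝ)-α) / ((1-α) * (2-α)) := by
    have hcongr : (∫ τ in (0:ℝ)..h, τ * (h - τ) ^ (-α))
        = ∫ τ in (0:ℝ)..h, (h * (h - τ) ^ (-α) - (h - τ) ^ (1-α)) := by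
      apply intervalIntegral.integral_congr
      intro τ _
      exact heqpt τ
    rw [hcongr, intervalIntegral.integral_sub (Ia.const_mul h) Ib,
      intervalIntegral.integral_const_mul, rpow_sub_integral h (-α) (by linarith),
      rpow_sub_integral h (1-α) (by linarith)]
    rw [show -α + 1 = 1 - α by ring, show (1:ℝ) - α + 1 = 2 - α by ring]
    rw [mul_div_assoc' h _ _, hpow2]
    field_simp
    ring
  have habs2 : |∫ τ in (0:ℝ)..h, (h - τ) ^ (-α-1) * g τ|
      ≤ M/2 * (h ^ ((2:ℝ)-α) / ((1-α) * (2-α))) := by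
    have habs : |∫ τ in (0:ℝ)..h, (h - τ) ^ (-α-1) * g τ|
        ≤ ∫ τ in (0:ℝ)..h, |(h - τ) ^ (-α-1) * g τ| := by
      simpa only [Real.norm_eq_abs] using
        intervalIntegral.norm_integral_le_integral_norm (μ := volume)
          (f := fun τ => (h - τ) ^ (-α-1) * g τ) hh.le
    refine habs.trans ?_
    have hmono2 : (∫ τ in (0:ℝ)..h, |(h - τ) ^ (-α-1) * g τ|)
        ≤ ∫ τ in (0:ℝ)..h, (M/2) * (τ * (h - τ) ^ (-α)) := by
      apply intervalIntegral.integral_mono_on hh.le hK2int.abs (hKb.const_mul (M/2))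
      intro τ hτ
      by_cases hτh : h - τ = 0
      · rw [hτh, Real.zero_rpow (by linarith : -α - 1 ≠ 0),
          Real.zero_rpow (by linarith : -α ≠ 0)]
        simp
      · have hpos : (0:ℝ) < h - τ := lt_of_le_of_ne (by linarith [hτ.2]) (Ne.symm hτh)
        have hrw : (h - τ) ^ (-α-1) * (h - τ) = (h - τ) ^ (-α) := by
          rw [← Real.rpow_add_one hpos.ne']
          norm_num
        have h1 : |(h - τ) ^ (-α-1) * g τ| = (h - τ) ^ (-α-1) * |g τ| := by
          rw [abs_mul, abs_of_nonneg (Real.rpow_nonneg hpos.le _)]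
        rw [h1]
        calc (h - τ) ^ (-α-1) * |g τ| ≤ (h - τ) ^ (-α-1) * (M/2 * (τ * (h - τ))) :=
              mul_le_mul_of_nonneg_left (hgb τ hτ) (Real.rpow_nonneg hpos.le _)
          _ = (M/2) * τ * ((h - τ) ^ (-α-1) * (h - τ)) := by ring
          _ = (M/2) * τ * (h - τ) ^ (-α) := by rw [hrw]
          _ = M/2 * (τ * (h - τ) ^ (-α)) := by ring
    refine hmono2.trans ?_
    rw [intervalIntegral.integral_const_mul, hKbval]
  -- conclude
  have hΓpos : 0 < Real.Gamma (1-α) := Real.Gamma_pos_of_pos (by linarith)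
  have hΓ3 : Real.Gamma (3-α) = (2-α) * ((1-α) * Real.Gamma (1-α)) := by
    rw [show (3:ℝ)-α = (2-α)+1 by ring, Real.Gamma_add_one hne2,
      show (2:ℝ)-α = (1-α)+1 by ring, Real.Gamma_add_one hne1]
  rw [hJ]
  have habs3 : |1 / Real.Gamma (1-α) * -(α * ∫ τ in (0:ℝ)..h, (h - τ) ^ (-α-1) * g τ)|
      = 1 / Real.Gamma (1-α) * (α * |∫ τ in (0:ℝ)..h, (h - τ) ^ (-α-1) * g τ|) := by
    rw [abs_mul, abs_neg, abs_mul, abs_of_nonneg hα0.le,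
      abs_of_nonneg (by positivity : (0:ℝ) ≤ 1 / Real.Gamma (1-α))]
  rw [habs3]
  calc 1 / Real.Gamma (1-α) * (α * |∫ τ in (0:ℝ)..h, (h - τ) ^ (-α-1) * g τ|)
      ≤ 1 / Real.Gamma (1-α) * (α * (M/2 * (h ^ ((2:ℝ)-α) / ((1-α) * (2-α))))) := by
        exact mul_le_mul_of_nonneg_left (mul_le_mul_of_nonneg_left habs2 hα0.le)
          (by positivity)
    _ = α / (2 * Real.Gamma (3-α)) * M * h ^ ((2:ℝ)-α) := by
        rw [hΓ3]
        field_simp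
end
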